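/- Let $p_j(\omega) = 1/(1+\|\omega\|^2)^{s_j}$ on $\mathbb{R}^{d_j}$ with $s_j \ge s_{j-1}$, and let $W: \mathbb{R}^{d_{j-1}} \to \mathbb{R}^{d_j}$ be a linear map. Then $\sup_{\omega \in \mathcal{R}(W)} p_j(\omega)/p_{j-1}(W^\ast\omega) \le \max\{1, \|W\|^{2s_{j-1}}\}$, where the supremum is taken over the range $\mathcal{R}(W)$ of $W$. -/

import Mathlib

/-! Since `‖Wᵀ‖ = ‖W‖`, we have `1 + ‖Wᵀω‖² ≤ max 1 ‖W‖² · (1 + ‖ω‖²)`. Raising this to the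
power `s₀ ≥ 0` and using `(1 + ‖ω‖²)^{s₀} ≤ (1 + ‖ω‖²)^{s₁}` bounds the ratio
`(1 + ‖Wᵀω‖²)^{s₀} / (1 + ‖ω‖²)^{s₁}` by `(max 1 ‖W‖²)^{s₀} = max 1 ‖W‖^{2s₀}`. -/

open Matrix

noncomputable def matOpNorm {m n : ℕ} (W : Matrix (Fin m) (Fin n) ℝ) : ℝ :=
  ‖LinearMap.toContinuousLinearMap (Matrix.toEuclideanLin W)‖

section OperatorNorm

open scoped Matrix.Norms.L2Operator

variable {m n : ℕ}

theorem matOpNorm_eq_l2_opNorm (W : Matrix (Fin m) (Fin n) ℝ) : matOpNorm W = ‖W‖ := rfl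

theorem matOpNorm_transpose (W : Matrix (Fin m) (Fin n) ℝ) : matOpNorm Wᵀ = matOpNorm W := by
  rw [matOpNorm_eq_l2_opNorm, matOpNorm_eq_l2_opNorm, ← conjTranspose_eq_transpose_of_trivial,
    l2_opNorm_conjTranspose]

theorem norm_toEuclideanLin_le (W : Matrix (Fin m) (Fin n) ℝ) (x : EuclideanSpace ℝ (Fin n)) :
    ‖toEuclideanLin W x‖ ≤ matOpNorm W * ‖x‖ :=
  (LinearMap.toContinuousLinearMap (toEuclideanLin W)).le_opNorm x

theorem matOpNorm_nonneg (W : Matrix (Fin m) (Fin n) ℝ) : 0 ≤ matOpNorm W := norm_nonneg _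

end OperatorNorm

theorem one_add_sq_le_max_one_sq_mul {x y c : ℝ} (hy : 0 ≤ y) (h : y ≤ c * x) :
    1 + y ^ 2 ≤ max 1 (c ^ 2) * (1 + x ^ 2) := by
  have hy2 : y ^ 2 ≤ c ^ 2 * x ^ 2 := by rw [← mul_pow]; exact pow_le_pow_left₀ hy h 2
  nlinarith [le_max_left 1 (c ^ 2), le_max_right 1 (c ^ 2), sq_nonneg x]

theorem max_one_sq_rpow {c s : ℝ} (hc : 0 ≤ c) (hs : 0 ≤ s) :
    max 1 (c ^ 2) ^ s = max 1 (c ^ (2 * s)) := by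
  rw [Real.rpow_max zero_le_one (sq_nonneg c) hs, Real.one_rpow, ← Real.rpow_natCast,
    ← Real.rpow_mul hc, Nat.cast_ofNat]

theorem rpow_div_rpow_le_of_le_mul {a b k s₀ s₁ : ℝ} (ha : 1 ≤ a) (hb : 0 ≤ b) (hk : 0 ≤ k)
    (hba : b ≤ k * a) (hs₀ : 0 ≤ s₀) (hs : s₀ ≤ s₁) : b ^ s₀ / a ^ s₁ ≤ k ^ s₀ := by
  rw [div_le_iff₀ (by positivity)]
  calc b ^ s₀ ≤ (k * a) ^ s₀ := Real.rpow_le_rpow hb hba hs₀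
    _ = k ^ s₀ * a ^ s₀ := Real.mul_rpow hk (by linarith)
    _ ≤ k ^ s₀ * a ^ s₁ := by gcongr

theorem p_ratio_le_opNorm_pow_injective_general {d0 d1 : ℕ} (s0 s1 : ℝ)
    (hs0 : (d0 : ℝ) / 2 < s0) (hss : s0 ≤ s1)
    (W : Matrix (Fin d1) (Fin d0) ℝ)
    (p0 : EuclideanSpace ℝ (Fin d0) → ℝ) (p1 : EuclideanSpace ℝ (Fin d1) → ℝ)
    (hp0 : ∀ ω, p0 ω = 1 / (1 + ‖ω‖ ^ 2) ^ s0)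
    (hp1 : ∀ ω, p1 ω = 1 / (1 + ‖ω‖ ^ 2) ^ s1) :
    ∀ ω ∈ LinearMap.range (Matrix.toEuclideanLin W),
      p1 ω / p0 (Matrix.toEuclideanLin Wᵀ ω) ≤ max 1 (matOpNorm W ^ (2 * s0)) := by
  intro ω _
  have hs0_nonneg : 0 ≤ s0 := le_trans (by positivity) hs0.le
  have hWTω : ‖toEuclideanLin Wᵀ ω‖ ≤ matOpNorm W * ‖ω‖ := by
    simpa only [matOpNorm_transpose] using norm_toEuclideanLin_le Wᵀ ω
  rw [hp0, hp1, div_div_div_cancel_left' _ _ one_ne_zero,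
    ← max_one_sq_rpow (matOpNorm_nonneg W) hs0_nonneg]
  exact rpow_div_rpow_le_of_le_mul (le_add_of_nonneg_right (sq_nonneg _)) (by positivity)
    (by positivity) (one_add_sq_le_max_one_sq_mul (norm_nonneg _) hWTω) hs0_nonneg hss

/-- For `p_j(ω) = 1/(1+‖ω‖²)^{s_j}` with `s_j ≥ s_{j-1}` (and `s_j > d_j/2`), and a linear
map `W : ℝ^{d_{j-1}} → ℝ^{d_j}`, one has `p_j(ω)/p_{j-1}(W*ω) ≤ max {1, ‖W‖^{2 s_{j-1}}}`
for every `ω` in the range of `W`. -/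
theorem p_ratio_le_opNorm_pow_injective {d0 d1 : ℕ} (s0 s1 : ℝ)
    (hs0 : (d0 : ℝ) / 2 < s0) (hs1 : (d1 : ℝ) / 2 < s1) (hss : s0 ≤ s1)
    (W : Matrix (Fin d1) (Fin d0) ℝ)
    (p0 : EuclideanSpace ℝ (Fin d0) → ℝ) (p1 : EuclideanSpace ℝ (Fin d1) → ℝ)
    (hp0 : ∀ ω, p0 ω = 1 / (1 + ‖ω‖ ^ 2) ^ s0)
    (hp1 : ∀ ω, p1 ω = 1 / (1 + ‖ω‖ ^ 2) ^ s1) :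
    ∀ ω ∈ LinearMap.range (Matrix.toEuclideanLin W),
      p1 ω / p0 (Matrix.toEuclideanLin Wᵀ ω) ≤ max 1 (matOpNorm W ^ (2 * s0)) :=
  p_ratio_le_opNorm_pow_injective_general s0 s1 hs0 hss W p0 p1 hp0 hp1
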